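/- Fix a real α > 0 and let φ : ℕ → ℝ be the Laplace transform sequence φ(n) = E[e^{−α X(n)}], determined by φ(1) = 1 and, for n ≥ 2, φ(n) = e^{−α}·((1−1/n)^n·φ(n) + (1−1/n)^{n−1} + Σ_{k=2}^{n} b(n,k)·φ(k)). Then φ(n) converges as n → ∞ and lim_{n→∞} φ(n) = (e^{−α}/(1 − e^{−(α+1)}))·(e^{−1} + Σ_{k≥2} (e^{−1}/k!)·φ(k)). -/

import Mathlib

/-!
Solving the recursion for `φ n` (which occurs on both sides, with weight `b(n,0) + b(n,n)`) and
inducting on `n` gives `0 ≤ φ n ≤ 1`. Since `b(n,k) ≤ 1/k!` and `b(n,k) → e⁻¹/k!` (Poisson limit),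
dominated convergence gives `∑_{k=2}^n b(n,k) φ(k) → ∑_{k≥2} e⁻¹ φ(k)/k!`, and letting `n → ∞` in
`φ(n) (1 - e^{-α} b(n,0)) = e^{-α} (b(n,1) + ∑_{k=2}^n b(n,k) φ(k))` yields the limit.
-/

open Filter Topology Finset

noncomputable def binomProb (n k : ℕ) : ℝ :=
  n.choose k * (1 / (n : ℝ)) ^ k * (1 - 1 / (n : ℝ)) ^ (n - k)

lemma one_sub_one_div_natCast_nonneg (n : ℕ) : 0 ≤ 1 - 1 / (n : ℝ) := by
  simpa using (Nat.cast_inv_le_one n : (n : ℝ)⁻¹ ≤ 1)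

namespace binomProb

lemma nonneg (n k : ℕ) : 0 ≤ binomProb n k := by
  have := one_sub_one_div_natCast_nonneg n
  unfold binomProb; positivity

lemma zero_right (n : ℕ) : binomProb n 0 = (1 - 1 / (n : ℝ)) ^ n := by
  simp [binomProb]

lemma one_right {n : ℕ} (hn : n ≠ 0) : binomProb n 1 = (1 - 1 / (n : ℝ)) ^ (n - 1) := by
  simp [binomProb, hn]

lemma le_inv_factorial (n k : ℕ) : binomProb n k ≤ (k.factorial : ℝ)⁻¹ := by
  have hn : (n : ℝ) * (1 / n) ≤ 1 := by
    rcases eq_or_ne n 0 with rfl | hn0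
    · simp
    · simp [hn0]
  calc binomProb n k ≤ (n : ℝ) ^ k / k.factorial * (1 / (n : ℝ)) ^ k * 1 := by
        have := one_sub_one_div_natCast_nonneg n
        unfold binomProb
        gcongr
        · exact Nat.choose_le_pow_div k n
        · exact pow_le_one₀ this (by simp)
    _ = ((n : ℝ) * (1 / n)) ^ k * (k.factorial : ℝ)⁻¹ := by ring
    _ ≤ (k.factorial : ℝ)⁻¹ :=
        mul_le_of_le_one_left (by positivity) (pow_le_one₀ (by positivity) hn)

lemma sum_range (n : ℕ) : ∑ k ∈ range (n + 1), binomProb n k = 1 := by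
  have h := (add_pow (1 / (n : ℝ)) (1 - 1 / (n : ℝ)) n).symm
  rw [add_sub_cancel, one_pow] at h
  rw [← h]
  exact sum_congr rfl fun k _ => by unfold binomProb; ring

lemma tendsto_atTop (k : ℕ) :
    Tendsto (fun n => binomProb n k) atTop (𝓝 (Real.exp (-1) / k.factorial)) := by
  have hr : Tendsto (fun n : ℕ => (n : ℝ) * (1 / n)) atTop (𝓝 1) :=
    tendsto_const_nhds.congr' <| by
      filter_upwards [eventually_ne_atTop 0] with n hn
      field_simp
  simpa [binomProb] using ProbabilityTheory.tendsto_choose_mul_pow_of_tendsto_mul_atTop k hr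

lemma add_sum_Ioo_add {n : ℕ} (hn : 2 ≤ n) :
    binomProb n 0 + binomProb n 1 + ∑ k ∈ Ioo 1 n, binomProb n k + binomProb n n = 1 := by
  rw [← sum_range n, sum_range_succ, range_eq_Ico, sum_eq_sum_Ico_succ_bot (by omega),
    sum_eq_sum_Ico_succ_bot (by omega), Ico_add_one_left_eq_Ioo, add_assoc (binomProb n 0)]

end binomProb

lemma sum_Icc_two_eq_sum_Ioo_add {n : ℕ} (hn : 2 ≤ n) (f : ℕ → ℝ) :
    ∑ k ∈ Icc 2 n, f k = ∑ k ∈ Ioo 1 n, f k + f n := by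
  rw [show Icc 2 n = Ioc 1 n from Icc_add_one_left_eq_Ioc 1 n, ← Ioo_insert_right (by omega),
    sum_insert (by simp), add_comm]

lemma summable_inv_factorial_add (m : ℕ) : Summable fun k : ℕ => ((k + m).factorial : ℝ)⁻¹ := by
  have h := Real.summable_pow_div_factorial 1
  simp only [one_pow, one_div] at h
  exact (summable_nat_add_iff m).mpr h

section Tannery

variable {ψ : ℕ → ℝ} {C : ℝ}

lemma summable_div_factorial_mul (c : ℝ) (m : ℕ) (hψ : ∀ k, m ≤ k → |ψ k| ≤ C) :
    Summable fun k : ℕ => c / (k + m).factorial * ψ (k + m) := by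
  refine .of_norm_bounded ((summable_inv_factorial_add m).mul_left (|c| * C)) fun k => ?_
  rw [norm_mul, norm_div, Real.norm_natCast, Real.norm_eq_abs, Real.norm_eq_abs]
  calc |c| / (k + m).factorial * |ψ (k + m)| ≤ |c| / (k + m).factorial * C := by
        gcongr; exact hψ _ (by omega)
    _ = |c| * C * ((k + m).factorial : ℝ)⁻¹ := by ring

lemma tendsto_sum_Icc_binomProb_mul (m : ℕ) (hψ : ∀ k, m ≤ k → |ψ k| ≤ C) :
    Tendsto (fun n => ∑ k ∈ Icc m n, binomProb n k * ψ k) atTop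
      (𝓝 (∑' k : ℕ, Real.exp (-1) / (k + m).factorial * ψ (k + m))) := by
  set f : ℕ → ℕ → ℝ := fun n k => if k + m ≤ n then binomProb n (k + m) * ψ (k + m) else 0
  have hC : 0 ≤ C := (abs_nonneg _).trans (hψ m le_rfl)
  have hlim : ∀ k, Tendsto (f · k) atTop (𝓝 (Real.exp (-1) / (k + m).factorial * ψ (k + m))) :=
    fun k => ((binomProb.tendsto_atTop (k + m)).mul_const _).congr' <| by
      filter_upwards [eventually_ge_atTop (k + m)] with n hn
      simp [f, hn]
  have hbound : ∀ n k, ‖f n k‖ ≤ C * ((k + m).factorial : ℝ)⁻¹ := by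
    intro n k
    by_cases hk : k + m ≤ n
    · simp only [f, if_pos hk, norm_mul, Real.norm_eq_abs, abs_of_nonneg (binomProb.nonneg _ _)]
      calc binomProb n (k + m) * |ψ (k + m)| ≤ ((k + m).factorial : ℝ)⁻¹ * C := by
            gcongr
            · exact binomProb.le_inv_factorial _ _
            · exact hψ _ (by omega)
        _ = _ := mul_comm _ _
    · simp only [f, if_neg hk, norm_zero]
      positivity
  have hsum : ∀ n, ∑' k, f n k = ∑ k ∈ Icc m n, binomProb n k * ψ k := by
    intro n
    rw [tsum_eq_sum (s := range (n + 1 - m)) fun k hk => if_neg (by simp at hk; omega),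
      ← Ico_add_one_right_eq_Icc, sum_Ico_eq_sum_range]
    refine sum_congr rfl fun k hk => ?_
    rw [if_pos (by simp at hk; omega), add_comm]
  simpa only [hsum] using tendsto_tsum_of_dominated_convergence
    ((summable_inv_factorial_add m).mul_left C) hlim (.of_forall hbound)

end Tannery

section Recursion

def IsLaplaceRec (E : ℝ) (φ : ℕ → ℝ) : Prop :=
  ∀ n, 2 ≤ n → φ n = E * (binomProb n 0 * φ n + binomProb n 1 + ∑ k ∈ Icc 2 n, binomProb n k * φ k)

variable {E : ℝ} {φ : ℕ → ℝ}

lemma mem_Icc_of_rec (hE0 : 0 ≤ E) (hE1 : E < 1) (hφ1 : φ 1 ∈ Set.Icc 0 1)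
    (hrec : IsLaplaceRec E φ) :
    ∀ n, 1 ≤ n → φ n ∈ Set.Icc 0 1 := by
  intro n hn
  induction n using Nat.strong_induction_on with | _ n ih =>
  obtain rfl | hn2 : n = 1 ∨ 2 ≤ n := by omega
  · exact hφ1
  have hb := binomProb.nonneg n
  set S := ∑ k ∈ Ioo 1 n, binomProb n k * φ k
  have hS : 0 ≤ S ∧ S ≤ ∑ k ∈ Ioo 1 n, binomProb n k := by
    constructor
    · exact sum_nonneg fun k hk => mul_nonneg (hb k) (ih k (mem_Ioo.1 hk).2 (mem_Ioo.1 hk).1.le).1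
    · exact sum_le_sum fun k hk =>
        mul_le_of_le_one_right (hb k) (ih k (mem_Ioo.1 hk).2 (mem_Ioo.1 hk).1.le).2
  have hsolve : φ n * (1 - E * (binomProb n 0 + binomProb n n)) = E * (binomProb n 1 + S) := by
    have := hrec n hn2
    rw [sum_Icc_two_eq_sum_Ioo_add hn2] at this
    linear_combination this
  have hmass := binomProb.add_sum_Ioo_add hn2
  have hD : 0 < 1 - E * (binomProb n 0 + binomProb n n) := by
    nlinarith [hb 1, hS.1.trans hS.2]
  constructor <;> nlinarith [hb 0, hb 1, hb n]

lemma abs_le_one_of_rec (hE0 : 0 ≤ E) (hE1 : E < 1) (hφ1 : φ 1 ∈ Set.Icc 0 1)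
    (hrec : IsLaplaceRec E φ) (n : ℕ) (hn : 1 ≤ n) : |φ n| ≤ 1 :=
  have h := mem_Icc_of_rec hE0 hE1 hφ1 hrec n hn
  (abs_of_nonneg h.1).trans_le h.2

lemma tendsto_of_rec (hE0 : 0 ≤ E) (hE1 : E < 1) (hφ1 : φ 1 ∈ Set.Icc 0 1)
    (hrec : IsLaplaceRec E φ) :
    Tendsto φ atTop (𝓝 (E * (Real.exp (-1) +
      ∑' k : ℕ, Real.exp (-1) / (k + 2).factorial * φ (k + 2)) / (1 - E * Real.exp (-1)))) := by
  have hbdd : ∀ k, 2 ≤ k → |φ k| ≤ 1 := fun k hk =>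
    abs_le_one_of_rec hE0 hE1 hφ1 hrec k (by omega)
  have hden : Tendsto (fun n => 1 - E * binomProb n 0) atTop (𝓝 (1 - E * Real.exp (-1))) := by
    simpa using ((binomProb.tendsto_atTop 0).const_mul E).const_sub 1
  have hnum := ((binomProb.tendsto_atTop 1).add (tendsto_sum_Icc_binomProb_mul 2 hbdd)).const_mul E
  simp only [Nat.factorial_one, Nat.cast_one, div_one] at hnum
  have hD : E * Real.exp (-1) < 1 :=
    (mul_le_of_le_one_right hE0 (Real.exp_le_one_iff.mpr (by norm_num))).trans_lt hE1
  refine (hnum.div hden (sub_ne_zero.mpr hD.ne')).congr' ?_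
  filter_upwards [eventually_ge_atTop 2] with n hn
  have hDn : 0 < 1 - E * binomProb n 0 := by
    nlinarith [binomProb.nonneg n 0, binomProb.le_inv_factorial n 0]
  rw [Pi.div_apply, div_eq_iff hDn.ne']
  linear_combination -hrec n hn

end Recursion

/-- the Laplace transform sequence φ(n) = E[e^{−αX(n)}] converges and its
    limit equals (e^{−α}/(1−e^{−(α+1)}))·(e^{−1} + Σ_{k≥2} (e^{−1}/k!)·φ(k)). -/
theorem phi_tendsto
    (α : ℝ) (hα : 0 < α)
    (φ : ℕ → ℝ)
    (hφ1 : φ 1 = 1)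
    (hφ : ∀ n : ℕ, 2 ≤ n →
      φ n = Real.exp (-α) * ((1 - 1/(n:ℝ))^n * φ n + (1 - 1/(n:ℝ))^(n-1) +
        ∑ k ∈ Finset.Icc 2 n,
          (n.choose k : ℝ) * (1/(n:ℝ))^k * (1 - 1/(n:ℝ))^(n-k) * φ k)) :
    ∃ L : ℝ, Tendsto φ atTop (𝓝 L) ∧
      Summable (fun k : ℕ => Real.exp (-1) / (Nat.factorial (k+2)) * φ (k+2)) ∧
      L = Real.exp (-α) / (1 - Real.exp (-(α+1))) *
        (Real.exp (-1) + ∑' k : ℕ, Real.exp (-1) / (Nat.factorial (k+2)) * φ (k+2)) := by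
  have hE1 : Real.exp (-α) < 1 := Real.exp_lt_one_iff.mpr (by linarith)
  have hrec : IsLaplaceRec (Real.exp (-α)) φ := fun n hn => by
    rw [binomProb.zero_right, binomProb.one_right (by omega)]
    exact hφ n hn
  have hφ1' : φ 1 ∈ Set.Icc 0 1 := by simp [hφ1]
  have hbdd : ∀ k, 2 ≤ k → |φ k| ≤ 1 := fun k hk =>
    abs_le_one_of_rec (Real.exp_nonneg _) hE1 hφ1' hrec k (by omega)
  refine ⟨_, tendsto_of_rec (Real.exp_nonneg _) hE1 hφ1' hrec,
    summable_div_factorial_mul _ 2 hbdd, ?_⟩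
  rw [← Real.exp_add, div_mul_eq_mul_div]
  ring_nf
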